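/- Let A be a unital C*-algebra and w ∈ A invertible. Then Im(−w^{-1}) = w^{-1}·(Im w)·(w*)^{-1}; consequently Im w is strictly positive if and only if Im(−w^{-1}) is strictly positive, so w ↦ −w^{-1} is a bijection of the operator upper half-plane ℍ⁺(A) onto itself. -/

import Mathlib

noncomputable section

/-- The imaginary part `Im a = (a - a*)/(2i)` of an element of a complex star algebra. -/
def aIm {A : Type*} [NonUnitalRing A] [StarRing A] [Module ℂ A] (a : A) : A :=
  ((2 * Complex.I)⁻¹ : ℂ) • (a - star a)

/-- `k > 0`: `k` is selfadjoint, nonnegative and invertible. -/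
def StrictlyPos {A : Type*} [Ring A] [StarRing A] [PartialOrder A] (k : A) : Prop :=
  IsSelfAdjoint k ∧ 0 ≤ k ∧ IsUnit k

/-!
Since `w⁻¹ (w - w*) (w*)⁻¹ = (w*)⁻¹ - w⁻¹`, the imaginary part of `-w⁻¹` is the congruence
`w⁻¹ (Im w) (w⁻¹)*`, and congruence by a unit preserves strict positivity in both directions.
For the bijection, `a ↦ -a⁻¹` is an involution on units, so it remains to see that
`Im a > 0` forces `a` to be invertible: with `c = (Im a)^(-1/2)` one has
`c a c = c (Re a) c + i`, and `i` is not in the (real) spectrum of the selfadjoint `-c (Re a) c`.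
-/

open Complex ComplexStarModule

lemma Ring.inverse_neg_inverse {R : Type*} [Ring R] {a : R} (ha : IsUnit a) :
    Ring.inverse (-Ring.inverse a) = -a := by
  lift a to Rˣ using ha
  simp [← Units.val_neg]

lemma aIm_eq_imaginaryPart {A : Type*} [NonUnitalRing A] [StarRing A] [Module ℂ A]
    [StarModule ℂ A] (a : A) : aIm a = ℑ a := by
  rw [aIm, imaginaryPart_apply_coe, ← Complex.coe_smul, smul_smul]
  congr 1
  simp [mul_comm]

lemma strictlyPos_iff_isStrictlyPositive {A : Type*} [Ring A] [StarRing A] [PartialOrder A]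
    [StarOrderedRing A] {k : A} : StrictlyPos k ↔ IsStrictlyPositive k :=
  ⟨fun ⟨_, hk, hu⟩ => hu.isStrictlyPositive hk,
    fun hk => ⟨hk.isSelfAdjoint, hk.nonneg, hk.isUnit⟩⟩

section StarAlgebra

variable {A : Type*} [Ring A] [StarRing A] [Algebra ℂ A]

lemma aIm_neg_ringInverse {w : A} (hw : IsUnit w) :
    aIm (-Ring.inverse w) = Ring.inverse w * aIm w * Ring.inverse (star w) := by
  have hconj : Ring.inverse w * (w - star w) * star (Ring.inverse w) =
      star (Ring.inverse w) - Ring.inverse w := by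
    rw [mul_sub, sub_mul, Ring.inverse_mul_cancel w hw, one_mul, mul_assoc, ← star_mul,
      Ring.inverse_mul_cancel w hw, star_one, mul_one]
  rw [Ring.inverse_star, aIm, aIm, mul_smul_comm, smul_mul_assoc, hconj, star_neg,
    sub_neg_eq_add, neg_add_eq_sub]

lemma strictlyPos_aIm_neg_ringInverse_iff [PartialOrder A] [StarOrderedRing A] {w : A}
    (hw : IsUnit w) : StrictlyPos (aIm (-Ring.inverse w)) ↔ StrictlyPos (aIm w) := by
  rw [strictlyPos_iff_isStrictlyPositive, strictlyPos_iff_isStrictlyPositive,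
    aIm_neg_ringInverse hw, Ring.inverse_star]
  exact (isUnit_ringInverse.mpr hw).isStrictlyPositive_star_right_conjugate_iff

end StarAlgebra

lemma IsSelfAdjoint.isUnit_add_I_smul_one {A : Type*} [CStarAlgebra A] {b : A}
    (hb : IsSelfAdjoint b) : IsUnit (b + I • 1) := by
  have hI : -I ∉ spectrum ℂ b := fun h => by
    simpa [Complex.ext_iff] using hb.mem_spectrum_eq_re h
  have := (spectrum.notMem_iff.mp hI).neg
  rwa [Algebra.algebraMap_eq_smul_one, neg_sub, neg_smul, sub_neg_eq_add] at this

lemma isUnit_of_strictlyPos_aIm {A : Type*} [CStarAlgebra A] [PartialOrder A]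
    [StarOrderedRing A] {a : A} (ha : StrictlyPos (aIm a)) : IsUnit a := by
  rw [strictlyPos_iff_isStrictlyPositive, aIm_eq_imaginaryPart] at ha
  set c : A := (ℑ a : A) ^ (-(1 / 2) : ℝ)
  have hc : IsStrictlyPositive c := ha.rpow _ _
  have hcac : c * a * c = c * ℜ a * c + I • 1 := by
    conv_lhs => rw [← realPart_add_I_smul_imaginaryPart a]
    rw [mul_add, add_mul, mul_smul_comm, smul_mul_assoc, CFC.conjugate_rpow_neg_one_half _ ha]
  have hunit : IsUnit (c * a * c) :=
    hcac ▸ ((ℜ a).2.conjugate_self hc.isSelfAdjoint).isUnit_add_I_smul_one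
  obtain ⟨u, hu⟩ := hc.isUnit
  rwa [← hu, Units.isUnit_mul_units, Units.isUnit_units_mul] at hunit

/-- For invertible `w` in a unital C*-algebra,
`Im(-w⁻¹) = w⁻¹·(Im w)·(w*)⁻¹`; consequently `Im w > 0` iff `Im(-w⁻¹) > 0`, and
`w ↦ -w⁻¹` is a bijection of the operator upper half-plane onto itself. -/
theorem stmt_16 {A : Type*} [CStarAlgebra A] [PartialOrder A] [StarOrderedRing A]
    (w : A) (hw : IsUnit w) :
    aIm (-(Ring.inverse w)) = Ring.inverse w * aIm w * Ring.inverse (star w) ∧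
    (StrictlyPos (aIm w) ↔ StrictlyPos (aIm (-(Ring.inverse w)))) ∧
    Set.BijOn (fun a : A => -(Ring.inverse a))
      {a : A | StrictlyPos (aIm a)} {a : A | StrictlyPos (aIm a)} := by
  refine ⟨aIm_neg_ringInverse hw, (strictlyPos_aIm_neg_ringInverse_iff hw).symm, ?_⟩
  have hmaps : Set.MapsTo (fun a : A => -Ring.inverse a)
      {a | StrictlyPos (aIm a)} {a | StrictlyPos (aIm a)} := fun a ha =>
    (strictlyPos_aIm_neg_ringInverse_iff (isUnit_of_strictlyPos_aIm ha)).mpr ha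
  have hinvol : Set.LeftInvOn (fun a : A => -Ring.inverse a) (fun a : A => -Ring.inverse a)
      {a | StrictlyPos (aIm a)} := fun a ha => by
    simp only [Ring.inverse_neg_inverse (isUnit_of_strictlyPos_aIm ha), neg_neg]
  exact Set.InvOn.bijOn ⟨hinvol, hinvol⟩ hmaps hmaps
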